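/- arXiv:2308.12768 — 2 statements merged into one kernel-verified Lean document; each statement's English description precedes it below -/
import Mathlib

section
/- Let w ∈ W_p be such that wsw⁻¹ ∉ W_{I,p}. Then the orbit of w·μ + pX under the dot action of W_I on X/pX has exactly |W_I| elements; that is, N_I(w·μ) = |W_I|. -/
/-!
The stabiliser of `ν = w·μ` in `W_p` is `{1, wsw⁻¹}`, so `ν` has trivial stabiliser in `W_{I,p}`.
Elements of `W_I` are linear and move a lattice point only by an element of `ℤI`. Hence if
`a·ν ≡ b·ν (mod pX)` with `a, b ∈ W_I`, the difference lies in `pX ∩ ℤI = pℤI`, so it is undone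
by a translation `t ∈ W_{I,p}`: then `b⁻¹ t a` fixes `ν`, hence is `1`, so `t = b a⁻¹` fixes `0`,
forcing `t = 1` and `a = b`. Thus `u ↦ u·ν + pX` is a bijection from `W_I` onto the orbit.
-/

noncomputable section

/-- The real vector space `X ⊗ ℝ`, where `X` is a free abelian group of rank `r`. -/
abbrev Vr (r : ℕ) := Fin r → ℝ

/-- The lattice `X` (identified with `ℤ^r`); its dual lattice `Y` is identified with
the same coordinate lattice via the standard perfect pairing. -/
abbrev Lr (r : ℕ) := Fin r → ℤ

/-- The embedding `X → X ⊗ ℝ`. -/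
def toV {r : ℕ} (x : Lr r) : Vr r := fun i => (x i : ℝ)

/-- The perfect pairing `⟨·,·⟩ : X × Y → ℤ`. -/
def pairZ {r : ℕ} (x y : Lr r) : ℤ := ∑ i, x i * y i

/-- The real extension of the pairing to `(X ⊗ ℝ) × Y → ℝ`. -/
def pairR {r : ℕ} (v : Vr r) (y : Lr r) : ℝ := ∑ i, v i * (y i : ℝ)

/-- The subgroup `ℤI` of `X` generated by a subset `I ⊆ X`. -/
def ZI {r : ℕ} (I : Finset (Lr r)) : AddSubgroup (Lr r) :=
  AddSubgroup.closure (I : Set (Lr r))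

/-- The data of a reduced crystallographic root system `Φ ⊆ X` with a fixed positive
system `Φ⁺`, simple roots `Φ_s`, coroots `α∨ ∈ Y`, a prime `p`, and the half-sum
`ρ ∈ X` of the positive roots. -/
structure ARDatum (r : ℕ) where
  Φ : Finset (Lr r)
  pos : Finset (Lr r)
  simples : Finset (Lr r)
  coroot : Lr r → Lr r
  p : ℕ
  ρ : Lr r
  hp : p.Prime
  root_ne_zero : ∀ α ∈ Φ, α ≠ 0
  pos_sub : pos ⊆ Φ
  simples_sub : simples ⊆ pos
  pos_or_neg : ∀ α ∈ Φ, α ∈ pos ∨ -α ∈ pos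
  not_pos_and_neg : ∀ α ∈ pos, -α ∉ pos
  neg_mem : ∀ α ∈ Φ, -α ∈ Φ
  root_coroot_two : ∀ α ∈ Φ, pairZ α (coroot α) = 2
  reflect_root_mem : ∀ α ∈ Φ, ∀ β ∈ Φ, β - pairZ β (coroot α) • α ∈ Φ
  reflect_coroot_mem : ∀ α ∈ Φ, ∀ β ∈ Φ,
    coroot β - pairZ α (coroot β) • coroot α ∈ coroot '' (Φ : Set (Lr r))
  reduced : ∀ α ∈ Φ, ∀ c : ℤ, c • α ∈ Φ → c = 1 ∨ c = -1
  pos_sum_simples : ∀ β ∈ pos, ∃ c : Lr r → ℕ, β = ∑ α ∈ simples, (c α : ℤ) • α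
  two_rho : (2 : ℤ) • ρ = ∑ α ∈ pos, α

namespace ARDatum

/-- The group of affine transformations of `X ⊗ ℝ`. -/
abbrev G (r : ℕ) := (Vr r) ≃ᵃ[ℝ] (Vr r)

variable {r : ℕ} (D : ARDatum r)

/-- `g` is the affine reflection `s_{α,mp} : v ↦ v − (⟨v,α∨⟩ − mp)·α`. -/
def IsRefl (α : Lr r) (m : ℤ) (g : G r) : Prop :=
  ∀ v : Vr r, g v = v - (pairR v (D.coroot α) - (m : ℝ) * (D.p : ℝ)) • toV α

/-- `g` is the linear reflection `s_α : v ↦ v − ⟨v,α∨⟩·α`. -/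
def IsLinRefl (α : Lr r) (g : G r) : Prop := D.IsRefl α 0 g

/-- `g` is the translation `t_{α,mp} : v ↦ v + mp·α`. -/
def IsTransl (α : Lr r) (m : ℤ) (g : G r) : Prop :=
  ∀ v : Vr r, g v = v + ((m : ℝ) * (D.p : ℝ)) • toV α

/-- The affine Weyl group `W_p`, generated by the `s_α` and the `t_{α,mp}`
for `α ∈ Φ⁺`, `m ∈ ℤ`. -/
def Wp : Subgroup (G r) :=
  Subgroup.closure ({g | ∃ α ∈ D.pos, D.IsLinRefl α g} ∪
    {g | ∃ α ∈ D.pos, ∃ m : ℤ, D.IsTransl α m g})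

/-- The finite Weyl group `W`, generated by the `s_α` for `α ∈ Φ⁺`. -/
def W : Subgroup (G r) :=
  Subgroup.closure {g | ∃ α ∈ D.pos, D.IsLinRefl α g}

/-- The subgroup `W_{I,p}` generated by the `s_α` and `t_{α,mp}` for `α ∈ I`. -/
def WIp (I : Finset (Lr r)) : Subgroup (G r) :=
  Subgroup.closure ({g | ∃ α ∈ I, D.IsLinRefl α g} ∪
    {g | ∃ α ∈ I, ∃ m : ℤ, D.IsTransl α m g})

/-- The subgroup `W_I` of `W` generated by the `s_α` for `α ∈ I`. -/
def WI (I : Finset (Lr r)) : Subgroup (G r) :=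
  Subgroup.closure {g | ∃ α ∈ I, D.IsLinRefl α g}

/-- `g` is a reflection (the reflections of `W_p` are exactly the `s_{α,mp}`). -/
def IsReflection (g : G r) : Prop := ∃ α ∈ D.pos, ∃ m : ℤ, D.IsRefl α m g

/-- The dot action `w·v := w(v+ρ) − ρ`. -/
def dot (g : G r) (v : Vr r) : Vr r := g (v + toV D.ρ) - toV D.ρ

/-- The hyperplane `H_{α,n} = {v : ⟨v+ρ,α∨⟩ = np}`. -/
def Hyp (α : Lr r) (n : ℤ) : Set (Vr r) :=
  {v | pairR (v + toV D.ρ) (D.coroot α) = (n : ℝ) * (D.p : ℝ)}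

/-- The complement of the union of all the hyperplanes `H_{α,n}`. -/
def Reg : Set (Vr r) :=
  {v | ∀ α ∈ D.pos, ∀ n : ℤ, pairR (v + toV D.ρ) (D.coroot α) ≠ (n : ℝ) * (D.p : ℝ)}

/-- The alcove containing `v` (the connected component of `v` in the complement of
the hyperplanes). -/
def alcoveOf (v : Vr r) : Set (Vr r) := connectedComponentIn D.Reg v

/-- `H_{α,n}` contains a wall of `A`, i.e. the interior of `closure A ∩ H_{α,n}`
inside the hyperplane `H_{α,n}` is nonempty. -/
def HasWall (A : Set (Vr r)) (α : Lr r) (n : ℤ) : Prop :=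
  ∃ x ∈ closure A ∩ D.Hyp α n, ∃ ε > 0,
    ∀ y ∈ D.Hyp α n, dist y x < ε → y ∈ closure A

/-- The fundamental alcove `C`. -/
def FundC : Set (Vr r) :=
  {v | ∀ α ∈ D.pos, 0 < pairR (v + toV D.ρ) (D.coroot α) ∧
    pairR (v + toV D.ρ) (D.coroot α) < (D.p : ℝ)}

/-- The closure `C̄` of the fundamental alcove. -/
def FundCBar : Set (Vr r) :=
  {v | ∀ α ∈ D.pos, 0 ≤ pairR (v + toV D.ρ) (D.coroot α) ∧
    pairR (v + toV D.ρ) (D.coroot α) ≤ (D.p : ℝ)}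

/-- The region `C_I`. -/
def CI (I : Finset (Lr r)) : Set (Vr r) :=
  {v | ∀ α ∈ D.pos, α ∈ ZI I → 0 < pairR (v + toV D.ρ) (D.coroot α) ∧
    pairR (v + toV D.ρ) (D.coroot α) < (D.p : ℝ)}

/-- The region `C̄_I`. -/
def CIBar (I : Finset (Lr r)) : Set (Vr r) :=
  {v | ∀ α ∈ D.pos, α ∈ ZI I → 0 ≤ pairR (v + toV D.ρ) (D.coroot α) ∧
    pairR (v + toV D.ρ) (D.coroot α) ≤ (D.p : ℝ)}

/-- `S_p`: the reflections of `W_p` in the walls of the fundamental alcove `C`. -/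
def Sp : Set (G r) :=
  {g | g ∈ D.Wp ∧ ∃ α ∈ D.pos, ∃ m : ℤ, D.IsRefl α m g ∧ D.HasWall D.FundC α m}

/-- One step of the order `⪯` (`↑`): `s_{α,mp}·u ⪯ u` whenever `⟨u+ρ,α∨⟩ ≥ mp`. -/
def UpStep (v u : Vr r) : Prop :=
  ∃ α ∈ D.pos, ∃ m : ℤ, (m : ℝ) * (D.p : ℝ) ≤ pairR (u + toV D.ρ) (D.coroot α) ∧
    v = u - (pairR (u + toV D.ρ) (D.coroot α) - (m : ℝ) * (D.p : ℝ)) • toV α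

/-- The order `⪯` (`↑`): the reflexive-transitive closure of `UpStep`. -/
def Up : Vr r → Vr r → Prop := Relation.ReflTransGen D.UpStep

/-- The strict order `≺`. -/
def Ups (v u : Vr r) : Prop := D.Up v u ∧ v ≠ u

/-- The order `≤`: `v ≤ u` iff `u − v` is a `ℤ≥0`-combination of the simple roots. -/
def Le (v u : Vr r) : Prop :=
  ∃ c : Lr r → ℕ, u - v = ∑ α ∈ D.simples, (c α : ℝ) • toV α

/-- The strict order `<`. -/
def Lt (v u : Vr r) : Prop := D.Le v u ∧ v ≠ u

/-- `X₊ = {ν ∈ X : ⟨ν+ρ,α∨⟩ ≥ 0 for all α ∈ Φ⁺}`, viewed inside `X ⊗ ℝ`. -/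
def XplusR : Set (Vr r) :=
  {v | (∃ ν : Lr r, toV ν = v) ∧ ∀ α ∈ D.pos, 0 ≤ pairR (v + toV D.ρ) (D.coroot α)}

/-- `n_α(v)`: the unique integer with `n_α(v)·p < ⟨v+ρ,α∨⟩ < (n_α(v)+1)·p`
(for `v` on none of the hyperplanes), realised as a floor. -/
def nfl (v : Vr r) (α : Lr r) : ℤ := ⌊pairR (v + toV D.ρ) (D.coroot α) / (D.p : ℝ)⌋

/-- `d(v) = ∑_{α ∈ Φ⁺} n_α(v)`. -/
def dfn (v : Vr r) : ℤ := ∑ α ∈ D.pos, D.nfl v α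

/-- The sublattice `pX` of `X`. -/
def pLat : AddSubgroup (Lr r) where
  carrier := {x | ∃ y : Lr r, x = (D.p : ℤ) • y}
  zero_mem' := ⟨0, by simp⟩
  add_mem' := by rintro a b ⟨y, rfl⟩ ⟨z, rfl⟩; exact ⟨y + z, (smul_add _ _ _).symm⟩
  neg_mem' := by rintro a ⟨y, rfl⟩; exact ⟨-y, (smul_neg _ _).symm⟩

/-- The orbit of `ν + pX` under the dot action of `W_I` on `X/pX`. -/
def dotOrbit (I : Finset (Lr r)) (ν : Lr r) : Set (Lr r ⧸ D.pLat) :=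
  {c | ∃ w ∈ D.WI I, ∃ ν' : Lr r, toV ν' = D.dot w (toV ν) ∧
    c = QuotientAddGroup.mk ν'}

end ARDatum

namespace ARDatum

variable {r : ℕ}

@[simp]
lemma toV_zero : toV (0 : Lr r) = 0 := by
  funext i; simp [toV]

@[simp]
lemma toV_neg (x : Lr r) : toV (-x) = -toV x := by
  funext i; simp [toV]

@[simp]
lemma toV_add (x y : Lr r) : toV (x + y) = toV x + toV y := by
  funext i; simp [toV]

@[simp]
lemma toV_sub (x y : Lr r) : toV (x - y) = toV x - toV y := by
  funext i; simp [toV]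

@[simp]
lemma toV_zsmul (c : ℤ) (x : Lr r) : toV (c • x) = (c : ℝ) • toV x := by
  funext i; simp [toV]

lemma toV_injective : Function.Injective (toV (r := r)) := fun x y h =>
  funext fun i => by simpa [toV] using congrFun h i

lemma pairR_toV (x y : Lr r) : pairR (toV x) y = pairZ x y := by
  simp [pairR, pairZ, toV]

lemma pairR_sub_smul (v a : Vr r) (c : ℝ) (y : Lr r) :
    pairR (v - c • a) y = pairR v y - c * pairR a y := by
  simp [pairR, sub_mul, Finset.sum_sub_distrib, Finset.mul_sum, mul_assoc]

variable (D : ARDatum r)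

section DotAction

lemma dot_mul (a b : G r) (v : Vr r) : D.dot (a * b) v = D.dot a (D.dot b v) := by
  simp [dot]

lemma dot_inv_dot (a : G r) (v : Vr r) : D.dot a⁻¹ (D.dot a v) = v := by
  rw [← dot_mul, inv_mul_cancel]
  simp [dot]

lemma dot_of_forall_apply_eq_add {t : G r} {c : Vr r} (ht : ∀ v, t v = v + c) (v : Vr r) :
    D.dot t v = v + c := by
  rw [dot, ht]
  abel

end DotAction

section LinearReflections

variable {D} {α : Lr r} {g : G r}

lemma IsLinRefl.apply (h : D.IsLinRefl α g) (v : Vr r) :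
    g v = v - pairR v (D.coroot α) • toV α := by
  simpa using h v

lemma IsLinRefl.apply_zero (h : D.IsLinRefl α g) : g 0 = 0 := by
  simp [h.apply, pairR]

lemma IsLinRefl.apply_toV (h : D.IsLinRefl α g) (ξ : Lr r) :
    g (toV ξ) = toV (ξ - pairZ ξ (D.coroot α) • α) := by
  rw [h.apply, pairR_toV, toV_sub, toV_zsmul]

lemma IsLinRefl.inv_eq (h : D.IsLinRefl α g) (hα : pairZ α (D.coroot α) = 2) : g⁻¹ = g := by
  refine inv_eq_of_mul_eq_one_right (AffineEquiv.ext fun v => ?_)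
  change g (g v) = v
  rw [h.apply (g v), h.apply v, pairR_sub_smul, pairR_toV, hα, sub_sub, ← add_smul]
  have hcoeff : ∀ c : ℝ, c + (c - c * ((2 : ℤ) : ℝ)) = 0 := fun c => by push_cast; ring
  rw [hcoeff, zero_smul, sub_zero]

end LinearReflections

section ParabolicSubgroups

variable {D} {I : Finset (Lr r)}

lemma WI_induction (hI : I ⊆ D.simples) {P : G r → Prop}
    (refl : ∀ α ∈ I, ∀ g, D.IsLinRefl α g → P g) (one : P 1)
    (mul : ∀ a b, P a → P b → P (a * b)) {u : G r} (hu : u ∈ D.WI I) : P u := by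
  induction hu using Subgroup.closure_induction'' with
  | mem g hg => obtain ⟨α, hα, hg⟩ := hg; exact refl α hα g hg
  | inv_mem g hg =>
    obtain ⟨α, hα, hg⟩ := hg
    rw [hg.inv_eq (D.root_coroot_two α (D.pos_sub (D.simples_sub (hI hα))))]
    exact refl α hα g hg
  | one => exact one
  | mul a b _ _ ha hb => exact mul a b ha hb

lemma apply_zero_of_mem_WI (hI : I ⊆ D.simples) {u : G r} (hu : u ∈ D.WI I) : u 0 = 0 :=
  WI_induction hI (fun _ _ _ hg => hg.apply_zero) rfl
    (fun a b ha hb => by simp [ha, hb]) hu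

lemma exists_apply_toV_of_mem_WI (hI : I ⊆ D.simples) {u : G r} (hu : u ∈ D.WI I) (ξ : Lr r) :
    ∃ ξ', u (toV ξ) = toV ξ' ∧ ξ' - ξ ∈ ZI I := by
  revert ξ
  refine WI_induction (P := fun u => ∀ ξ, ∃ ξ', u (toV ξ) = toV ξ' ∧ ξ' - ξ ∈ ZI I) hI
    (fun α hα g hg ξ => ⟨_, hg.apply_toV ξ, ?_⟩) (fun ξ => ⟨ξ, rfl, by simp⟩)
    (fun a b ha hb ξ => ?_) hu
  · rw [sub_sub_cancel_left]
    exact (ZI I).neg_mem (AddSubgroup.zsmul_mem _ (AddSubgroup.subset_closure hα) _)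
  · obtain ⟨ξ₁, h₁, m₁⟩ := hb ξ
    obtain ⟨ξ₂, h₂, m₂⟩ := ha ξ₁
    refine ⟨ξ₂, by simp [h₁, h₂], ?_⟩
    simpa using add_mem m₂ m₁

lemma exists_dot_toV_of_mem_WI (hI : I ⊆ D.simples) {u : G r} (hu : u ∈ D.WI I) (ν : Lr r) :
    ∃ ν', D.dot u (toV ν) = toV ν' ∧ ν' - ν ∈ ZI I := by
  obtain ⟨ξ', hξ', hmem⟩ := exists_apply_toV_of_mem_WI hI hu (ν + D.ρ)
  refine ⟨ξ' - D.ρ, ?_, ?_⟩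
  · rw [dot, ← toV_add, hξ', toV_sub]
  · rwa [sub_sub, add_comm D.ρ]

lemma exists_transl_mem_WIp {y : Lr r} (hy : y ∈ ZI I) :
    ∃ t ∈ D.WIp I, ∀ v, t v = v + (D.p : ℝ) • toV y := by
  induction hy using AddSubgroup.closure_induction with
  | mem α hα =>
    refine ⟨AffineEquiv.constVAdd ℝ (Vr r) ((D.p : ℝ) • toV α),
      Subgroup.subset_closure (Or.inr ⟨α, hα, 1, fun v => ?_⟩), fun v => add_comm _ _⟩
    simp [add_comm]
  | zero => exact ⟨1, one_mem _, fun v => by simp⟩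
  | add a b _ _ ha hb =>
    obtain ⟨t₁, ht₁, h₁⟩ := ha
    obtain ⟨t₂, ht₂, h₂⟩ := hb
    refine ⟨t₁ * t₂, mul_mem ht₁ ht₂, fun v => ?_⟩
    simp only [AffineEquiv.coe_mul, Function.comp_apply, h₁, h₂, toV_add, smul_add]
    abel
  | neg a _ ha =>
    obtain ⟨t, ht, h⟩ := ha
    refine ⟨t⁻¹, inv_mem ht, fun v => ?_⟩
    rw [AffineEquiv.inv_def, AffineEquiv.symm_apply_eq, h]
    simp

lemma WI_le_WIp : D.WI I ≤ D.WIp I :=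
  Subgroup.closure_mono Set.subset_union_left

lemma WIp_le_Wp (hI : I ⊆ D.simples) : D.WIp I ≤ D.Wp :=
  Subgroup.closure_mono <| Set.union_subset_union
    (fun _ ⟨α, hα, h⟩ => ⟨α, D.simples_sub (hI hα), h⟩)
    (fun _ ⟨α, hα, m, h⟩ => ⟨α, D.simples_sub (hI hα), m, h⟩)

lemma eq_one_of_mem_WIp_of_dot_eq (hI : I ⊆ D.simples) {s w : G r} {μ : Vr r}
    (hμ : ∀ g ∈ D.Wp, D.dot g μ = μ → g = 1 ∨ g = s) (hw : w ∈ D.Wp)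
    (hconj : w * s * w⁻¹ ∉ D.WIp I) {g : G r} (hg : g ∈ D.WIp I)
    (hfix : D.dot g (D.dot w μ) = D.dot w μ) : g = 1 := by
  have hconj_fix : D.dot (w⁻¹ * g * w) μ = μ := by
    rw [dot_mul, dot_mul, hfix, dot_inv_dot]
  have hg_eq : g = w * (w⁻¹ * g * w) * w⁻¹ := by group
  rcases hμ _ (mul_mem (mul_mem (inv_mem hw) (WIp_le_Wp hI hg)) hw) hconj_fix with h | h
  · rw [hg_eq, h, mul_one, mul_inv_cancel]
  · exact (hconj (by rwa [hg_eq, h] at hg)).elim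

lemma eq_of_dot_toV_eq_mod_pLat (hI : I ⊆ D.simples)
    (hpXI : ∀ x ∈ D.pLat, x ∈ ZI I → ∃ y ∈ ZI I, x = (D.p : ℤ) • y) {ν : Lr r}
    (hfree : ∀ g ∈ D.WIp I, D.dot g (toV ν) = toV ν → g = 1)
    {a b : G r} (ha : a ∈ D.WI I) (hb : b ∈ D.WI I) {νa νb : Lr r}
    (hνa : D.dot a (toV ν) = toV νa) (hνb : D.dot b (toV ν) = toV νb)
    (hab : (νa : Lr r ⧸ D.pLat) = νb) : a = b := by
  obtain ⟨νa', hνa', hma⟩ := exists_dot_toV_of_mem_WI hI ha ν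
  obtain ⟨νb', hνb', hmb⟩ := exists_dot_toV_of_mem_WI hI hb ν
  obtain rfl : νa = νa' := toV_injective (hνa.symm.trans hνa')
  obtain rfl : νb = νb' := toV_injective (hνb.symm.trans hνb')
  obtain ⟨y, hy, hδ⟩ := hpXI (νa - νb) (QuotientAddGroup.eq_iff_sub_mem.1 hab)
    (by simpa using (ZI I).sub_mem hma hmb)
  obtain ⟨t, ht, htv⟩ := exists_transl_mem_WIp (D := D) ((ZI I).neg_mem hy)
  have hfix : D.dot (b⁻¹ * t * a) (toV ν) = toV ν := by
    have hδ' : toV νa = toV νb + (D.p : ℝ) • toV y := by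
      rw [← Int.cast_natCast, ← toV_zsmul, ← toV_add, ← hδ, add_sub_cancel]
    rw [dot_mul, dot_mul, hνa, dot_of_forall_apply_eq_add _ htv, hδ', toV_neg, smul_neg,
      add_neg_cancel_right, ← hνb, dot_inv_dot]
  have h1 : b⁻¹ * t * a = 1 :=
    hfree _ (mul_mem (mul_mem (inv_mem (WI_le_WIp hb)) ht) (WI_le_WIp ha)) hfix
  have hb_eq : b = t * a := inv_mul_eq_one.1 (by rwa [← mul_assoc])
  have hshift : (D.p : ℝ) • toV (-y) = 0 := by
    have ht0 : t 0 = 0 := by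
      simpa [hb_eq, apply_zero_of_mem_WI hI ha] using apply_zero_of_mem_WI hI hb
    rwa [htv, zero_add] at ht0
  have ht1 : t = 1 := AffineEquiv.ext fun v => by rw [htv, hshift, add_zero]; rfl
  rw [hb_eq, ht1, one_mul]

end ParabolicSubgroups

end ARDatum

open ARDatum

theorem stmt2_general {r : ℕ} (D : ARDatum r)
    (I : Finset (Lr r)) (hI : I ⊆ D.simples)
    (s : ARDatum.G r)
    (mu : Lr r)
    (hmustab : ∀ g ∈ D.Wp, (D.dot g (toV mu) = toV mu ↔ g = 1 ∨ g = s))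
    (hpXI : ∀ x : Lr r, (x ∈ D.pLat ∧ x ∈ ZI I) ↔ ∃ y ∈ ZI I, x = (D.p : ℤ) • y)
    (w : ARDatum.G r) (hw : w ∈ D.Wp)
    (hconj : w * s * w⁻¹ ∉ D.WIp I)
    (ν : Lr r) (hν : toV ν = D.dot w (toV mu)) :
    (D.dotOrbit I ν).ncard = Nat.card (D.WI I) := by
  have hfree : ∀ g ∈ D.WIp I, D.dot g (toV ν) = toV ν → g = 1 := fun g hg hfix =>
    eq_one_of_mem_WIp_of_dot_eq hI (fun g hg => (hmustab g hg).1) hw hconj hg (hν ▸ hfix)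
  choose f hf using fun u : D.WI I => exists_dot_toV_of_mem_WI hI u.2 ν
  let orbitMap : D.WI I → Lr r ⧸ D.pLat := fun u => f u
  have hinj : Function.Injective orbitMap := fun a b hab =>
    Subtype.ext <| eq_of_dot_toV_eq_mod_pLat hI (fun x hx hxI => (hpXI x).1 ⟨hx, hxI⟩) hfree
      a.2 b.2 (hf a).1 (hf b).1 hab
  have hrange : Set.range orbitMap = D.dotOrbit I ν := by
    ext c
    constructor
    · rintro ⟨u, rfl⟩
      exact ⟨u, u.2, f u, (hf u).1.symm, rfl⟩
    · rintro ⟨g, hg, ν', hν', rfl⟩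
      exact ⟨⟨g, hg⟩, congrArg _ (toV_injective ((hf _).1.symm.trans hν'.symm))⟩
  rw [← hrange, Set.ncard_range_of_injective hinj]

/-- If `wsw⁻¹ ∉ W_{I,p}`, the orbit of `w·μ + pX` under the dot action of `W_I`
on `X/pX` has exactly `|W_I|` elements. -/
theorem stmt2 {r : ℕ} (D : ARDatum r)
    (I : Finset (Lr r)) (hI : I ⊆ D.simples)
    (s : ARDatum.G r) (hs : s ∈ D.Sp)
    (lam mu : Lr r) (hlam : toV lam ∈ D.FundC) (hmu : toV mu ∈ D.FundCBar)
    (hmustab : ∀ g ∈ D.Wp, (D.dot g (toV mu) = toV mu ↔ g = 1 ∨ g = s))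
    (hlamstab : ∀ g ∈ D.Wp, D.dot g (toV lam) = toV lam → g = 1)
    (hpXI : ∀ x : Lr r, (x ∈ D.pLat ∧ x ∈ ZI I) ↔ ∃ y ∈ ZI I, x = (D.p : ℤ) • y)
    (w : ARDatum.G r) (hw : w ∈ D.Wp)
    (hconj : w * s * w⁻¹ ∉ D.WIp I)
    (ν : Lr r) (hν : toV ν = D.dot w (toV mu)) :
    (D.dotOrbit I ν).ncard = Nat.card (D.WI I) :=
  stmt2_general D I hI s mu hmustab hpXI w hw hconj ν hν

end
end

section
/- Let λ ∈ C ∩ X, let w ∈ W_p, and let α ∈ Φ⁺ and n ∈ ℤ be such that the hyperplane H_{α,n} contains a wall of the alcove containing w·λ. If s_{α,np}w·λ ≺ w·λ, then d(s_{α,np}w·λ) = d(w·λ) − 1. -/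
noncomputable section

/-!
Write `v = w·λ` and `s = s_{α,np}`. The form `B(x, y) = ∑_{β∨} ⟨x,β∨⟩⟨y,β∨⟩` is `W`-invariant,
so `2 B(x, γ) = ⟨x,γ∨⟩ B(γ, γ)` and, as `λ ∈ C`, the functional `B(λ+ρ, ·)` is positive on `Φ⁺`,
hence monotone for `⪯`. Thus `s·v ≺ v` forces `⟨v+ρ,α∨⟩ > np`; since `H_{α,n}` bounds the alcove
of `v`, this gives `n_α(v) = n` and `n_α(s·v) = n - 1`. For `β ≠ α` the alcoves of `v` and `s·v`
share the wall in `H_{α,n}`; if `n_β` jumped across it, `⟨·+ρ,β∨⟩` would be constant on that wall,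
making `β∨` proportional to `α∨`, which is impossible for distinct positive roots of a finite
reduced root system.
-/

section Pairing

variable {r : ℕ}

lemma toV_neg (x : Lr r) : toV (-x) = -toV x := by
  funext i; simp [toV]

lemma toV_sub_zsmul (x y : Lr r) (m : ℤ) : toV (x - m • y) = toV x - (m : ℝ) • toV y := by
  funext i; simp [toV]

lemma pairZ_sub_zsmul_right (x y z : Lr r) (m : ℤ) :
    pairZ x (y - m • z) = pairZ x y - m * pairZ x z := by
  simp only [pairZ, Finset.mul_sum, ← Finset.sum_sub_distrib]
  exact Finset.sum_congr rfl fun i _ => by simp only [Pi.sub_apply, Pi.smul_apply, smul_eq_mul]; ring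

lemma pairR_add_left (u v : Vr r) (y : Lr r) : pairR (u + v) y = pairR u y + pairR v y := by
  simp [pairR, add_mul, Finset.sum_add_distrib]

lemma pairR_sub_left (u v : Vr r) (y : Lr r) : pairR (u - v) y = pairR u y - pairR v y := by
  simp [pairR, sub_mul, Finset.sum_sub_distrib]

lemma pairR_smul_left (c : ℝ) (u : Vr r) (y : Lr r) : pairR (c • u) y = c * pairR u y := by
  simp [pairR, Finset.mul_sum, mul_assoc]

lemma pairR_neg_left (u : Vr r) (y : Lr r) : pairR (-u) y = -pairR u y := by
  simp [pairR, Finset.sum_neg_distrib]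

lemma pairR_sub_right (v : Vr r) (y z : Lr r) : pairR v (y - z) = pairR v y - pairR v z := by
  simp [pairR, mul_sub, Finset.sum_sub_distrib]

lemma pairR_zsmul_right (v : Vr r) (m : ℤ) (y : Lr r) : pairR v (m • y) = m * pairR v y := by
  simp only [pairR, Finset.mul_sum]
  exact Finset.sum_congr rfl fun i _ => by simp only [Pi.smul_apply, smul_eq_mul]; push_cast; ring

lemma pairR_toV (x y : Lr r) : pairR (toV x) y = pairZ x y := by
  simp [pairR, pairZ, toV]

lemma continuous_pairR (y : Lr r) : Continuous fun v : Vr r => pairR v y :=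
  continuous_finsetSum _ fun i _ => (continuous_apply i).mul continuous_const

lemma pairR_sub_pairR_smul (u : Vr r) (a γ c : Lr r) :
    pairR (u - pairR u a • toV γ) c = pairR u (c - pairZ γ c • a) := by
  rw [pairR_sub_left, pairR_smul_left, pairR_sub_right, pairR_zsmul_right, pairR_toV]
  ring

lemma pairR_eq_zero_of_locally_const {a b : Lr r} {c x : Vr r} {ε : ℝ} (hε : 0 < ε)
    (h : ∀ y, pairR (y + c) a = pairR (x + c) a → dist y x < ε →
      pairR (y + c) b = pairR (x + c) b)
    (u : Vr r) (hu : pairR u a = 0) : pairR u b = 0 := by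
  set δ := ε / (2 * (‖u‖ + 1))
  have hδ : 0 < δ := by positivity
  have hshift : ∀ e, pairR (x + δ • u + c) e = pairR (x + c) e + δ * pairR u e := fun e => by
    rw [add_right_comm, pairR_add_left, pairR_smul_left]
  have hdist : dist (x + δ • u) x < ε := by
    rw [dist_eq_norm, add_sub_cancel_left, norm_smul, Real.norm_of_nonneg hδ.le]
    calc δ * ‖u‖ < δ * (2 * (‖u‖ + 1)) := by gcongr; linarith [norm_nonneg u]
      _ = ε := div_mul_cancel₀ _ (by positivity)
  have hb := h (x + δ • u) (by rw [hshift, hu, mul_zero, add_zero]) hdist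
  rw [hshift] at hb
  simpa [hδ.ne'] using hb

end Pairing

namespace ARDatum

variable {r : ℕ} (D : ARDatum r)

lemma p_pos : (0 : ℝ) < D.p := by exact_mod_cast D.hp.pos

lemma pairR_toV_coroot_self {γ : Lr r} (hγ : γ ∈ D.Φ) : pairR (toV γ) (D.coroot γ) = 2 := by
  rw [pairR_toV, D.root_coroot_two γ hγ]; norm_num

def coroots : Finset (Lr r) := D.Φ.image D.coroot

def invForm (x y : Vr r) : ℝ := ∑ c ∈ D.coroots, pairR x c * pairR y c

lemma invForm_comm (x y : Vr r) : D.invForm x y = D.invForm y x := by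
  simp only [invForm, mul_comm]

lemma invForm_sub_left (x y z : Vr r) : D.invForm (x - y) z = D.invForm x z - D.invForm y z := by
  simp [invForm, pairR_sub_left, sub_mul, Finset.sum_sub_distrib]

lemma invForm_smul_left (c : ℝ) (x z : Vr r) : D.invForm (c • x) z = c * D.invForm x z := by
  simp [invForm, pairR_smul_left, Finset.mul_sum, mul_assoc]

lemma invForm_neg_left (x z : Vr r) : D.invForm (-x) z = -D.invForm x z := by
  simp [invForm, pairR_neg_left, Finset.sum_neg_distrib]

lemma invForm_sub_right (x y z : Vr r) : D.invForm x (y - z) = D.invForm x y - D.invForm x z := by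
  rw [invForm_comm, invForm_sub_left, invForm_comm _ y, invForm_comm _ z]

lemma invForm_smul_right (c : ℝ) (x z : Vr r) : D.invForm x (c • z) = c * D.invForm x z := by
  rw [invForm_comm, invForm_smul_left, invForm_comm]

lemma invForm_neg_right (x z : Vr r) : D.invForm x (-z) = -D.invForm x z := by
  rw [invForm_comm, invForm_neg_left, invForm_comm]

/-- The reflection `c ↦ c - ⟨γ, c⟩ γ∨` permutes the coroots and is adjoint to `s_γ`. -/
lemma invForm_reflect {γ : Lr r} (hγ : γ ∈ D.Φ) (x y : Vr r) :
    D.invForm (x - pairR x (D.coroot γ) • toV γ) (y - pairR y (D.coroot γ) • toV γ) =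
      D.invForm x y := by
  set σ : Lr r → Lr r := fun c => c - pairZ γ c • D.coroot γ
  have hσσ : ∀ c, σ (σ c) = c := fun c => by
    simp only [σ, pairZ_sub_zsmul_right, D.root_coroot_two γ hγ]
    rw [sub_sub, ← add_smul]
    ring_nf
  have hσ : ∀ c ∈ D.coroots, σ c ∈ D.coroots := fun c hc => by
    obtain ⟨δ, hδ, rfl⟩ := Finset.mem_image.mp hc
    obtain ⟨δ', hδ', hδ'eq⟩ := D.reflect_coroot_mem γ hγ δ hδ
    exact Finset.mem_image.mpr ⟨δ', hδ', hδ'eq⟩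
  simp only [invForm, pairR_sub_pairR_smul]
  exact Finset.sum_nbij' σ σ hσ hσ (fun c _ => hσσ c) (fun c _ => hσσ c) fun c _ => rfl

lemma two_mul_invForm_root {γ : Lr r} (hγ : γ ∈ D.Φ) (x : Vr r) :
    2 * D.invForm x (toV γ) = pairR x (D.coroot γ) * D.invForm (toV γ) (toV γ) := by
  have h := D.invForm_reflect hγ x (toV γ)
  rw [D.pairR_toV_coroot_self hγ, two_smul, sub_add_cancel_left, invForm_neg_right,
    invForm_sub_left, invForm_smul_left] at h
  linarith

lemma invForm_root_self_pos {γ : Lr r} (hγ : γ ∈ D.Φ) : 0 < D.invForm (toV γ) (toV γ) := by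
  have hle := Finset.single_le_sum (f := fun c => pairR (toV γ) c * pairR (toV γ) c)
    (fun c _ => mul_self_nonneg _) (Finset.mem_image_of_mem D.coroot hγ)
  simp only [D.pairR_toV_coroot_self hγ] at hle
  exact lt_of_lt_of_le (by norm_num) hle

lemma pairR_coroot_neg {γ : Lr r} (hγ : γ ∈ D.Φ) (v : Vr r) :
    pairR v (D.coroot (-γ)) = -pairR v (D.coroot γ) := by
  have h1 := D.two_mul_invForm_root hγ v
  have h2 := D.two_mul_invForm_root (D.neg_mem γ hγ) v
  rw [toV_neg, invForm_neg_right, invForm_neg_left, invForm_neg_right, neg_neg] at h2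
  exact mul_right_cancel₀ (D.invForm_root_self_pos hγ).ne' (by linarith)

lemma invForm_eq_zero_of_invForm_self_eq_zero {w : Vr r} (hw : D.invForm w w = 0) (v : Vr r) :
    D.invForm v w = 0 := by
  have hzero : ∀ c ∈ D.coroots, pairR w c = 0 := fun c hc =>
    mul_self_eq_zero.mp ((Finset.sum_eq_zero_iff_of_nonneg fun c _ => mul_self_nonneg _).mp hw c hc)
  exact Finset.sum_eq_zero fun c hc => by rw [hzero c hc, mul_zero]

/-- Cauchy–Schwarz for the semidefinite form `invForm`, in the guise of its equality case. -/
lemma exists_pairR_coroot_eq_mul_of_ker_le {α β : Lr r} (hα : α ∈ D.Φ) (hβ : β ∈ D.Φ)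
    (h : ∀ u : Vr r, pairR u (D.coroot α) = 0 → pairR u (D.coroot β) = 0) :
    ∃ s : ℝ, ∀ v : Vr r, pairR v (D.coroot β) = s * pairR v (D.coroot α) := by
  set Qa := D.invForm (toV α) (toV α)
  set Qb := D.invForm (toV β) (toV β)
  set Bab := D.invForm (toV α) (toV β)
  have hQa := D.invForm_root_self_pos hα
  have hQb := D.invForm_root_self_pos hβ
  set w : Vr r := Qa • toV β - Bab • toV α
  have hwα : D.invForm w (toV α) = 0 := by
    simp only [w, invForm_sub_left, invForm_smul_left, D.invForm_comm (toV β)]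
    ring
  have hpwα : pairR w (D.coroot α) = 0 := by
    have := D.two_mul_invForm_root hα w
    rw [hwα, mul_zero] at this
    exact (mul_eq_zero.mp this.symm).resolve_right hQa.ne'
  have hwβ : D.invForm w (toV β) = 0 := by
    have := D.two_mul_invForm_root hβ w
    rw [h w hpwα, zero_mul] at this
    linarith
  have hww : D.invForm w w = 0 := by
    conv_lhs => arg 3; rw [show w = Qa • toV β - Bab • toV α from rfl]
    rw [invForm_sub_right, invForm_smul_right, invForm_smul_right, hwα, hwβ]
    ring
  refine ⟨Bab / Qb, fun v => ?_⟩
  have h1 := D.two_mul_invForm_root hα v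
  have h2 := D.two_mul_invForm_root hβ v
  have h3 := D.invForm_eq_zero_of_invForm_self_eq_zero hww v
  simp only [w, invForm_sub_right, invForm_smul_right] at h3
  rw [div_mul_eq_mul_div, eq_div_iff hQb.ne']
  apply mul_right_cancel₀ hQa.ne'
  linear_combination (-Qa) * h2 + Bab * h1 + 2 * h3

lemma eq_of_two_zsmul_eq {α β : Lr r} (hα : α ∈ D.pos) (hβ : β ∈ D.pos) {a : ℤ} (ha : a ∣ 4)
    (h : (2 : ℤ) • α = a • β) : α = β := by
  have hαΦ := D.pos_sub hα
  have hβΦ := D.pos_sub hβ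
  have hc : ∀ i, 2 * α i = a * β i := fun i => by simpa using congrFun h i
  have hzsmul : ∀ (c : ℤ) (γ δ : Lr r), (∀ i, δ i = c * γ i) → δ = c • γ :=
    fun _ _ _ h => funext h
  obtain ⟨hlo, hhi⟩ := abs_le.mp (Int.le_of_dvd (by norm_num) ((abs_dvd a 4).mpr ha))
  interval_cases a
  · have := D.reduced β hβΦ (-2) (hzsmul (-2) β α (fun i => by have := hc i; omega) ▸ hαΦ)
    omega
  · norm_num at ha
  · have : -β = α := funext fun i => by have := hc i; simp only [Pi.neg_apply]; omega
    exact absurd (this ▸ hα) (D.not_pos_and_neg β hβ)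
  · have := D.reduced α hαΦ (-2) (hzsmul (-2) α β (fun i => by have := hc i; omega) ▸ hβΦ)
    omega
  · norm_num at ha
  · have := D.reduced α hαΦ 2 (hzsmul 2 α β (fun i => by have := hc i; omega) ▸ hβΦ)
    omega
  · exact funext fun i => by have := hc i; omega
  · norm_num at ha
  · have := D.reduced β hβΦ 2 (hzsmul 2 β α (fun i => by have := hc i; omega) ▸ hαΦ)
    omega

/-- If `β∨ = s α∨`, then `s_α s_β` translates the roots `δ` with `⟨δ,α∨⟩ = ⟨β,α∨⟩` by
`-⟨β,α∨⟩ (s β - α)`, producing the string below. -/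
lemma exists_root_eq_sub_smul {α β : Lr r} (hα : α ∈ D.Φ) (hβ : β ∈ D.Φ) {s : ℝ}
    (hs : ∀ v : Vr r, pairR v (D.coroot β) = s * pairR v (D.coroot α))
    (hsb : s * pairZ β (D.coroot α) = 2) (k : ℕ) :
    ∃ δ ∈ D.Φ, toV δ = toV β - ((k : ℝ) * pairZ β (D.coroot α)) • (s • toV β - toV α) := by
  set b : ℝ := (pairZ β (D.coroot α) : ℝ)
  have hdα : pairR (s • toV β - toV α) (D.coroot α) = 0 := by
    rw [pairR_sub_left, pairR_smul_left, pairR_toV, D.pairR_toV_coroot_self hα, hsb, sub_self]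
  induction k with
  | zero => exact ⟨β, hβ, by simp⟩
  | succ k ih =>
    obtain ⟨δ, hδ, hδeq⟩ := ih
    have hδα : pairR (toV δ) (D.coroot α) = b := by
      rw [hδeq, pairR_sub_left, pairR_smul_left, hdα, pairR_toV, mul_zero, sub_zero]
    set δ₁ := δ - pairZ δ (D.coroot β) • β
    have hδ₁ : toV δ₁ = toV δ - (s * b) • toV β := by
      rw [toV_sub_zsmul, ← pairR_toV, hs, hδα]
    have hδ₁α : pairR (toV δ₁) (D.coroot α) = -b := by
      rw [hδ₁, pairR_sub_left, pairR_smul_left, hδα, pairR_toV, hsb]; ring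
    refine ⟨δ₁ - pairZ δ₁ (D.coroot α) • α,
      D.reflect_root_mem α hα δ₁ (D.reflect_root_mem β hβ δ hδ), ?_⟩
    rw [toV_sub_zsmul, ← pairR_toV, hδ₁α, hδ₁, hδeq]
    push_cast
    module

lemma pairR_coroot_ne_mul {α β : Lr r} (hα : α ∈ D.pos) (hβ : β ∈ D.pos) (hne : β ≠ α) (s : ℝ) :
    ¬ ∀ v : Vr r, pairR v (D.coroot β) = s * pairR v (D.coroot α) := by
  intro hs
  have hαΦ := D.pos_sub hα
  have hβΦ := D.pos_sub hβ
  set a := pairZ α (D.coroot β)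
  set b := pairZ β (D.coroot α)
  have ha : (a : ℝ) = s * 2 := by rw [← pairR_toV, hs, D.pairR_toV_coroot_self hαΦ]
  have hsb : s * b = 2 := by rw [← pairR_toV, ← hs, D.pairR_toV_coroot_self hβΦ]
  have hab : a * b = 4 := by exact_mod_cast (by linear_combination (b : ℝ) * ha + 2 * hsb :
    (a : ℝ) * b = 4)
  have hb : (b : ℝ) ≠ 0 := by rintro h0; rw [h0, mul_zero] at hsb; norm_num at hsb
  by_cases hd : s • toV β - toV α = 0
  · refine hne (D.eq_of_two_zsmul_eq hα hβ ⟨b, hab.symm⟩ ?_).symm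
    funext i
    have := congrFun (sub_eq_zero.mp hd) i
    simp only [toV, Pi.smul_apply, smul_eq_mul] at this
    exact_mod_cast (by linear_combination (-2) * this - (β i : ℝ) * ha : (2 * α i : ℝ) = a * β i)
  · have hinj : Function.Injective fun k : ℕ => toV β - ((k : ℝ) * b) • (s • toV β - toV α) :=
      fun k₁ k₂ h => by
        exact_mod_cast mul_right_cancel₀ hb (smul_left_injective ℝ hd (sub_right_injective h))
    refine Set.infinite_of_injective_forall_mem (s := toV '' (D.Φ : Set (Lr r))) hinj
      (fun k => ?_) ((D.Φ.finite_toSet).image toV)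
    obtain ⟨δ, hδ, hδeq⟩ := D.exists_root_eq_sub_smul hαΦ hβΦ hs hsb k
    exact ⟨δ, hδ, hδeq⟩

lemma nfl_mul_p_lt {v : Vr r} (hv : v ∈ D.Reg) {β : Lr r} (hβ : β ∈ D.pos) :
    (D.nfl v β : ℝ) * D.p < pairR (v + toV D.ρ) (D.coroot β) :=
  lt_of_le_of_ne ((le_div_iff₀ D.p_pos).mp (Int.floor_le _)) (hv β hβ _).symm

lemma lt_nfl_add_one_mul_p (v : Vr r) (β : Lr r) :
    pairR (v + toV D.ρ) (D.coroot β) < ((D.nfl v β : ℝ) + 1) * D.p :=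
  (div_lt_iff₀ D.p_pos).mp (Int.lt_floor_add_one _)

lemma nfl_eq_of_le_of_lt {v : Vr r} {β : Lr r} {m : ℤ}
    (h₁ : (m : ℝ) * D.p ≤ pairR (v + toV D.ρ) (D.coroot β))
    (h₂ : pairR (v + toV D.ρ) (D.coroot β) < ((m : ℝ) + 1) * D.p) : D.nfl v β = m :=
  Int.floor_eq_iff.mpr ⟨(le_div_iff₀ D.p_pos).mpr h₁, (div_lt_iff₀ D.p_pos).mpr h₂⟩

lemma continuous_pairR_add_rho (y : Lr r) : Continuous fun v : Vr r => pairR (v + toV D.ρ) y :=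
  (continuous_pairR y).comp (continuous_add_const _)

lemma nfl_eq_of_isPreconnected {S : Set (Vr r)} (hS : IsPreconnected S) (hreg : S ⊆ D.Reg)
    {u v : Vr r} (hu : u ∈ S) (hv : v ∈ S) {β : Lr r} (hβ : β ∈ D.pos) :
    D.nfl u β = D.nfl v β := by
  wlog hlt : D.nfl u β < D.nfl v β generalizing u v
  · rcases (not_lt.mp hlt).lt_or_eq with h | h
    · exact (this hv hu h).symm
    · exact h.symm
  have hm : pairR (u + toV D.ρ) (D.coroot β) < (D.nfl v β : ℝ) * D.p :=
    (D.lt_nfl_add_one_mul_p u β).trans_le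
      (mul_le_mul_of_nonneg_right (by exact_mod_cast hlt) D.p_pos.le)
  obtain ⟨z, hz, hzeq⟩ := hS.intermediate_value hu hv (D.continuous_pairR_add_rho _).continuousOn
    ⟨hm.le, (D.nfl_mul_p_lt (hreg hv) hβ).le⟩
  exact absurd hzeq (hreg hz β hβ _)

lemma mem_Icc_of_mem_closure {S : Set (Vr r)} (hS : IsPreconnected S) (hreg : S ⊆ D.Reg)
    {v : Vr r} (hv : v ∈ S) {β : Lr r} (hβ : β ∈ D.pos) {u : Vr r} (hu : u ∈ closure S) :
    pairR (u + toV D.ρ) (D.coroot β) ∈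
      Set.Icc ((D.nfl v β : ℝ) * D.p) (((D.nfl v β : ℝ) + 1) * D.p) := by
  refine closure_minimal (fun z hz => ?_) (isClosed_Icc.preimage (D.continuous_pairR_add_rho _)) hu
  rw [Set.mem_preimage, ← D.nfl_eq_of_isPreconnected hS hreg hz hv hβ]
  exact ⟨(D.nfl_mul_p_lt (hreg hz) hβ).le, (D.lt_nfl_add_one_mul_p z β).le⟩

lemma pairR_eq_of_mem_closure_of_nfl_lt {S S' : Set (Vr r)} (hS : IsPreconnected S)
    (hS' : IsPreconnected S') (hreg : S ⊆ D.Reg) (hreg' : S' ⊆ D.Reg) {v v' : Vr r}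
    (hv : v ∈ S) (hv' : v' ∈ S') {β : Lr r} (hβ : β ∈ D.pos) (hlt : D.nfl v β < D.nfl v' β)
    {y : Vr r} (hy : y ∈ closure S) (hy' : y ∈ closure S') :
    pairR (y + toV D.ρ) (D.coroot β) = (D.nfl v' β : ℝ) * D.p := by
  have h := (D.mem_Icc_of_mem_closure hS hreg hv hβ hy).2
  have h' := (D.mem_Icc_of_mem_closure hS' hreg' hv' hβ hy').1
  have : ((D.nfl v β : ℝ) + 1) * D.p ≤ (D.nfl v' β : ℝ) * D.p :=
    mul_le_mul_of_nonneg_right (by exact_mod_cast hlt) D.p_pos.le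
  linarith

lemma mem_reg_of_hasWall {v : Vr r} {α : Lr r} {n : ℤ} (h : D.HasWall (D.alcoveOf v) α n) :
    v ∈ D.Reg := by
  obtain ⟨x, ⟨hx, -⟩, -⟩ := h
  exact connectedComponentIn_nonempty_iff.mp (closure_nonempty_iff.mp ⟨x, hx⟩)

/-- The dot action of `s_{α,np}`. -/
def reflDot (α : Lr r) (n : ℤ) (u : Vr r) : Vr r :=
  u - (pairR (u + toV D.ρ) (D.coroot α) - n * D.p) • toV α

lemma dot_mul_of_isRefl {α : Lr r} {n : ℤ} {t : G r} (ht : D.IsRefl α n t) (w : G r)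
    (μ : Vr r) : D.dot (t * w) μ = D.reflDot α n (D.dot w μ) := by
  simp only [dot, reflDot, sub_add_cancel]
  rw [AffineEquiv.mul_def, AffineEquiv.trans_apply, ht]
  abel

lemma pairR_reflDot_add_rho (α : Lr r) (n : ℤ) (u : Vr r) (c : Lr r) :
    pairR (D.reflDot α n u + toV D.ρ) c =
      pairR (u + toV D.ρ) c - (pairR (u + toV D.ρ) (D.coroot α) - n * D.p) * pairZ α c := by
  rw [reflDot, sub_add_eq_add_sub, pairR_sub_left, pairR_smul_left, pairR_toV]

lemma reflDot_mem_reg {α : Lr r} (hα : α ∈ D.Φ) (n : ℤ) {u : Vr r} (hu : u ∈ D.Reg) :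
    D.reflDot α n u ∈ D.Reg := by
  intro β hβ m hm
  obtain ⟨δ, hδ, hδeq⟩ := D.reflect_coroot_mem α hα β (D.pos_sub hβ)
  have hval : pairR (u + toV D.ρ) (D.coroot δ) = (m - n * pairZ α (D.coroot β) : ℤ) * D.p := by
    rw [pairR_reflDot_add_rho] at hm
    rw [hδeq, pairR_sub_right, pairR_zsmul_right]
    push_cast
    linear_combination hm
  rcases D.pos_or_neg δ hδ with hδ' | hδ'
  · exact hu δ hδ' _ hval
  · exact hu (-δ) hδ' (-(m - n * pairZ α (D.coroot β))) (by
      rw [D.pairR_coroot_neg hδ, hval]; push_cast; ring)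

lemma reflDot_eq_self_of_mem_hyp {α : Lr r} {n : ℤ} {u : Vr r} (hu : u ∈ D.Hyp α n) :
    D.reflDot α n u = u := by
  rw [reflDot, show pairR (u + toV D.ρ) (D.coroot α) = n * D.p from hu, sub_self, zero_smul,
    sub_zero]

lemma continuous_reflDot (α : Lr r) (n : ℤ) : Continuous (D.reflDot α n) :=
  continuous_id.sub (((D.continuous_pairR_add_rho _).sub continuous_const).smul continuous_const)

lemma invForm_pos_of_mem_fundC {μ : Vr r} (hμ : μ ∈ D.FundC) {γ : Lr r} (hγ : γ ∈ D.pos) :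
    0 < D.invForm (μ + toV D.ρ) (toV γ) := by
  have h := D.two_mul_invForm_root (D.pos_sub hγ) (μ + toV D.ρ)
  have := mul_pos (hμ γ hγ).1 (D.invForm_root_self_pos (D.pos_sub hγ))
  linarith

lemma invForm_le_of_up {μ : Vr r} (hμ : ∀ γ ∈ D.pos, 0 < D.invForm μ (toV γ)) {y z : Vr r}
    (h : D.Up y z) : D.invForm μ y ≤ D.invForm μ z := by
  induction h with
  | refl => exact le_rfl
  | tail _ hstep ih =>
    obtain ⟨γ, hγ, m, hm, rfl⟩ := hstep
    rw [invForm_sub_right, invForm_smul_right] at ih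
    nlinarith [hμ γ hγ]

lemma lt_pairR_of_up_reflDot {μ : Vr r} (hμ : μ ∈ D.FundC) {α : Lr r} (hα : α ∈ D.pos) {n : ℤ}
    {v : Vr r} (hv : v ∈ D.Reg) (h : D.Up (D.reflDot α n v) v) :
    n * D.p < pairR (v + toV D.ρ) (D.coroot α) := by
  have hle := D.invForm_le_of_up (fun γ hγ => D.invForm_pos_of_mem_fundC hμ hγ) h
  rw [reflDot, invForm_sub_right, invForm_smul_right] at hle
  have hpos := D.invForm_pos_of_mem_fundC hμ hα
  exact lt_of_le_of_ne (by nlinarith) (hv α hα n).symm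

lemma nfl_eq_of_hasWall {v : Vr r} {α : Lr r} (hα : α ∈ D.pos) {n : ℤ}
    (hwall : D.HasWall (D.alcoveOf v) α n) (hgt : n * D.p < pairR (v + toV D.ρ) (D.coroot α)) :
    D.nfl v α = n := by
  have hv := D.mem_reg_of_hasWall hwall
  obtain ⟨x, ⟨hxA, hxH⟩, -⟩ := hwall
  have hband := D.mem_Icc_of_mem_closure isPreconnected_connectedComponentIn
    (connectedComponentIn_subset _ _) (mem_connectedComponentIn hv) hα hxA
  rw [show pairR (x + toV D.ρ) (D.coroot α) = n * D.p from hxH] at hband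
  have hle : D.nfl v α ≤ n := by exact_mod_cast (mul_le_mul_iff_left₀ D.p_pos).mp hband.1
  have hlt : n < D.nfl v α + 1 := by
    exact_mod_cast (mul_lt_mul_iff_left₀ D.p_pos).mp (hgt.trans (D.lt_nfl_add_one_mul_p v α))
  omega

lemma nfl_reflDot_self {v : Vr r} {α : Lr r} (hα : α ∈ D.Φ) {n : ℤ}
    (h₁ : n * D.p < pairR (v + toV D.ρ) (D.coroot α))
    (h₂ : pairR (v + toV D.ρ) (D.coroot α) < (n + 1) * D.p) :
    D.nfl (D.reflDot α n v) α = n - 1 := by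
  have hval : pairR (D.reflDot α n v + toV D.ρ) (D.coroot α) =
      2 * (n * D.p) - pairR (v + toV D.ρ) (D.coroot α) := by
    rw [pairR_reflDot_add_rho, D.root_coroot_two α hα]; push_cast; ring
  apply D.nfl_eq_of_le_of_lt <;> rw [hval] <;> push_cast <;> linarith

lemma nfl_reflDot_of_ne {v : Vr r} {α β : Lr r} (hα : α ∈ D.pos) (hβ : β ∈ D.pos) (hne : β ≠ α)
    {n : ℤ} (hwall : D.HasWall (D.alcoveOf v) α n) :
    D.nfl (D.reflDot α n v) β = D.nfl v β := by
  have hv := D.mem_reg_of_hasWall hwall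
  obtain ⟨x, ⟨-, hxH⟩, ε, hε, hball⟩ := hwall
  set A := D.alcoveOf v
  set A' := D.reflDot α n '' A
  have hA : IsPreconnected A := isPreconnected_connectedComponentIn
  have hAreg : A ⊆ D.Reg := connectedComponentIn_subset _ _
  have hvA : v ∈ A := mem_connectedComponentIn hv
  have hA' : IsPreconnected A' := hA.image _ (D.continuous_reflDot α n).continuousOn
  have hA'reg : A' ⊆ D.Reg := by
    rintro _ ⟨u, hu, rfl⟩
    exact D.reflDot_mem_reg (D.pos_sub hα) n (hAreg hu)
  have hvA' : D.reflDot α n v ∈ A' := Set.mem_image_of_mem _ hvA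
  have hwall' : ∀ y ∈ D.Hyp α n, dist y x < ε → y ∈ closure A ∧ y ∈ closure A' := by
    intro y hy hyx
    have hyA := hball y hy hyx
    refine ⟨hyA, ?_⟩
    rw [← D.reflDot_eq_self_of_mem_hyp hy]
    exact image_closure_subset_closure_image (D.continuous_reflDot α n) (Set.mem_image_of_mem _ hyA)
  by_contra hjump
  obtain ⟨m, hm⟩ : ∃ m : ℤ, ∀ y ∈ D.Hyp α n, dist y x < ε →
      pairR (y + toV D.ρ) (D.coroot β) = m * D.p := by
    rcases lt_or_gt_of_ne hjump with h | h
    · exact ⟨_, fun y hy hyx => D.pairR_eq_of_mem_closure_of_nfl_lt hA' hA hA'reg hAreg hvA' hvA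
        hβ h (hwall' y hy hyx).2 (hwall' y hy hyx).1⟩
    · exact ⟨_, fun y hy hyx => D.pairR_eq_of_mem_closure_of_nfl_lt hA hA' hAreg hA'reg hvA hvA'
        hβ h (hwall' y hy hyx).1 (hwall' y hy hyx).2⟩
  have hker := pairR_eq_zero_of_locally_const (a := D.coroot α) (b := D.coroot β) hε
    fun y hy hyx => by rw [hm y (hy.trans hxH) hyx, hm x hxH (by rwa [dist_self])]
  obtain ⟨s, hs⟩ := D.exists_pairR_coroot_eq_mul_of_ker_le (D.pos_sub hα) (D.pos_sub hβ) hker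
  exact D.pairR_coroot_ne_mul hα hβ hne s hs

end ARDatum

theorem stmt4_general {r : ℕ} (D : ARDatum r)
    (lam : Lr r) (hlam : toV lam ∈ D.FundC)
    (w : ARDatum.G r)
    (α : Lr r) (hα : α ∈ D.pos) (n : ℤ)
    (t : ARDatum.G r) (ht : D.IsRefl α n t)
    (hwall : D.HasWall (D.alcoveOf (D.dot w (toV lam))) α n)
    (hlt : D.Ups (D.dot (t * w) (toV lam)) (D.dot w (toV lam))) :
    D.dfn (D.dot (t * w) (toV lam)) = D.dfn (D.dot w (toV lam)) - 1 := by
  set v := D.dot w (toV lam)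
  have hv : v ∈ D.Reg := D.mem_reg_of_hasWall hwall
  rw [D.dot_mul_of_isRefl ht] at hlt ⊢
  have hgt := D.lt_pairR_of_up_reflDot hlam hα hv hlt.1
  have hnα := D.nfl_eq_of_hasWall hα hwall hgt
  have hlt' : pairR (v + toV D.ρ) (D.coroot α) < (n + 1) * D.p := by
    simpa [hnα] using D.lt_nfl_add_one_mul_p v α
  have hrest : ∀ β ∈ D.pos.erase α, D.nfl (D.reflDot α n v) β = D.nfl v β := fun β hβ =>
    D.nfl_reflDot_of_ne hα (Finset.mem_of_mem_erase hβ) (Finset.ne_of_mem_erase hβ) hwall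
  rw [ARDatum.dfn, ARDatum.dfn, ← Finset.sum_erase_add _ _ hα, ← Finset.sum_erase_add _ _ hα,
    Finset.sum_congr rfl hrest, D.nfl_reflDot_self (D.pos_sub hα) hgt hlt', hnα]
  ring

/-- If `H_{α,n}` contains a wall of the alcove containing `w·λ` and
`s_{α,np}w·λ ≺ w·λ`, then `d(s_{α,np}w·λ) = d(w·λ) − 1`. -/
theorem stmt4 {r : ℕ} (D : ARDatum r)
    (lam : Lr r) (hlam : toV lam ∈ D.FundC)
    (hlamstab : ∀ g ∈ D.Wp, D.dot g (toV lam) = toV lam → g = 1)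
    (w : ARDatum.G r) (hw : w ∈ D.Wp)
    (α : Lr r) (hα : α ∈ D.pos) (n : ℤ)
    (t : ARDatum.G r) (ht : D.IsRefl α n t)
    (hwall : D.HasWall (D.alcoveOf (D.dot w (toV lam))) α n)
    (hlt : D.Ups (D.dot (t * w) (toV lam)) (D.dot w (toV lam))) :
    D.dfn (D.dot (t * w) (toV lam)) = D.dfn (D.dot w (toV lam)) - 1 :=
  stmt4_general D lam hlam w α hα n t ht hwall hlt
end
end
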